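/- Fix a > 0 and η > 0, and define on (0, ∞) the function L(ξ) = ∫_0^∞ t^a exp( −t − η √(2t/ξ) ) dt (the slowly varying component of the generalized double Pareto hyperprior). Then lim_{ξ→∞} L(ξ) = Γ(a+1) ∈ (0, ∞), and L is slowly varying, i.e., for every α > 0, lim_{x→∞} L(αx)/L(x) = 1; in particular there exist c₀ > 0 and t₀ such that L(t) ≥ c₀ for all t ≥ t₀, so (C1) holds for the generalized double Pareto prior. -/

import Mathlib

/-!
The perturbation `η √(2t/ξ)` is nonnegative and tends to `0` pointwise as `ξ → ∞`, so by dominated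
convergence (dominating function `t ^ a e^{-t}`) `L(ξ) → Γ(a + 1) > 0`. A function with a nonzero
limit at infinity is slowly varying, and one with a positive limit is eventually bounded below by
half of it.
-/

open Filter MeasureTheory Topology

lemma Real.Gamma_add_one_eq_integral_rpow_mul_exp {a : ℝ} (ha : -1 < a) :
    Real.Gamma (a + 1) = ∫ t in Set.Ioi (0 : ℝ), t ^ a * Real.exp (-t) := by
  simp only [Real.Gamma_eq_integral (by linarith : 0 < a + 1), add_sub_cancel_right, mul_comm]

lemma Real.integrableOn_rpow_mul_exp_neg {a : ℝ} (ha : -1 < a) :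
    IntegrableOn (fun t : ℝ => t ^ a * Real.exp (-t)) (Set.Ioi 0) := by
  simpa only [add_sub_cancel_right, mul_comm] using
    Real.GammaIntegral_convergent (s := a + 1) (by linarith)

lemma tendsto_sqrt_div_atTop_nhds_zero (c : ℝ) :
    Tendsto (fun ξ : ℝ => Real.sqrt (c / ξ)) atTop (𝓝 0) := by
  have hdiv : Tendsto (fun ξ : ℝ => c / ξ) atTop (𝓝 0) :=
    tendsto_const_nhds.div_atTop tendsto_id
  simpa [Function.comp_def] using (Real.continuous_sqrt.tendsto 0).comp hdiv

theorem tendsto_integral_rpow_mul_exp_neg_sub_mul_sqrt {a η : ℝ} (ha : -1 < a) (hη : 0 ≤ η) :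
    Tendsto
      (fun ξ : ℝ =>
        ∫ t in Set.Ioi (0 : ℝ), t ^ a * Real.exp (-t - η * Real.sqrt (2 * t / ξ)))
      atTop (𝓝 (Real.Gamma (a + 1))) := by
  rw [Real.Gamma_add_one_eq_integral_rpow_mul_exp ha]
  refine tendsto_integral_filter_of_dominated_convergence _
    (Eventually.of_forall fun ξ => by fun_prop) ?_ (Real.integrableOn_rpow_mul_exp_neg ha) ?_
  · refine Eventually.of_forall fun ξ => ?_
    filter_upwards [self_mem_ae_restrict measurableSet_Ioi] with t ht
    have hrpow : 0 ≤ t ^ a := Real.rpow_nonneg (le_of_lt ht) a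
    have hexp : Real.exp (-t - η * Real.sqrt (2 * t / ξ)) ≤ Real.exp (-t) :=
      Real.exp_le_exp.2 (by nlinarith [Real.sqrt_nonneg (2 * t / ξ)])
    rw [Real.norm_of_nonneg (by positivity)]
    exact mul_le_mul_of_nonneg_left hexp hrpow
  · refine Eventually.of_forall fun t => ?_
    have hexponent : Tendsto (fun ξ : ℝ => -t - η * Real.sqrt (2 * t / ξ)) atTop (𝓝 (-t)) := by
      simpa using tendsto_const_nhds.sub ((tendsto_sqrt_div_atTop_nhds_zero (2 * t)).const_mul η)
    exact ((Real.continuous_exp.tendsto _).comp hexponent).const_mul (t ^ a)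

theorem Filter.Tendsto.div_comp_const_mul_atTop_nhds_one {G₀ : Type*} [GroupWithZero G₀]
    [TopologicalSpace G₀] [ContinuousInv₀ G₀] [ContinuousMul G₀] {f : ℝ → G₀} {c : G₀}
    (hf : Tendsto f atTop (𝓝 c)) (hc : c ≠ 0) {α : ℝ} (hα : 0 < α) :
    Tendsto (fun x : ℝ => f (α * x) / f x) atTop (𝓝 1) := by
  simpa only [div_self hc, Function.comp_def, id, Pi.div_def] using
    (hf.comp (tendsto_id.const_mul_atTop hα)).div hf hc

/-- **Condition (C1) for the generalized double Pareto hyperprior.**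
For `a > 0`, `η > 0`, the function `L(ξ) = ∫₀^∞ t^a exp(-t - η √(2t/ξ)) dt`
tends to `Γ(a+1) ∈ (0,∞)` as `ξ → ∞`, is slowly varying, and in particular is
bounded below by some `c₀ > 0` eventually. -/
theorem gdp_slowly_varying (a η : ℝ) (ha : 0 < a) (hη : 0 < η) :
    Tendsto
      (fun ξ : ℝ =>
        ∫ t in Set.Ioi (0 : ℝ), t ^ a * Real.exp (-t - η * Real.sqrt (2 * t / ξ)))
      atTop (nhds (Real.Gamma (a + 1))) ∧
    0 < Real.Gamma (a + 1) ∧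
    (∀ α : ℝ, 0 < α →
      Tendsto
        (fun x : ℝ =>
          (∫ t in Set.Ioi (0 : ℝ),
              t ^ a * Real.exp (-t - η * Real.sqrt (2 * t / (α * x)))) /
            ∫ t in Set.Ioi (0 : ℝ), t ^ a * Real.exp (-t - η * Real.sqrt (2 * t / x)))
        atTop (nhds 1)) ∧
    ∃ c₀ : ℝ, 0 < c₀ ∧ ∃ t₀ : ℝ, ∀ ξ : ℝ, t₀ ≤ ξ →
      c₀ ≤ ∫ t in Set.Ioi (0 : ℝ), t ^ a * Real.exp (-t - η * Real.sqrt (2 * t / ξ)) := by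
  have hlim := tendsto_integral_rpow_mul_exp_neg_sub_mul_sqrt (by linarith : -1 < a) hη.le
  have hΓ : 0 < Real.Gamma (a + 1) := Real.Gamma_pos_of_pos (by linarith)
  refine ⟨hlim, hΓ, fun α hα => hlim.div_comp_const_mul_atTop_nhds_one hΓ.ne' hα, ?_⟩
  obtain ⟨t₀, ht₀⟩ := eventually_atTop.1 (hlim.eventually (eventually_ge_nhds (half_lt_self hΓ)))
  exact ⟨Real.Gamma (a + 1) / 2, half_pos hΓ, t₀, ht₀⟩
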